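/- Let k be a positive integer with gcd(k, 6) = 1. There exists a T-periodic point x ∈ D_k (i.e., x with denominator k in lowest terms and T^n(x) = x for some n ≥ 1) if and only if there exists a 0–1 vector v such that x(v) has denominator k in lowest terms (Proposition 3.1, claim 2). -/

import Mathlib

/-!
If `x` has period `n` and `v` is the parity vector of its first `n` iterates, then unwinding
`T` gives `T^[n] x = (3^ω(v) x + ρ(v)) / 2^n`, so `T^[n] x = x` forces `x = x(v)`.
Conversely, `2^n - 3^ω(v)` is odd, so the parity of `x(v)` is that of `ρ(v)`, namely `v₀`;
a direct computation then shows that `T` maps `x(v)` to `x` of the rotated vector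
`(v₁, …, v_{n-1}, v₀)`, hence `x(v)` is periodic with period dividing `n`.
-/

noncomputable def T (x : ℚ) : ℚ := if Even x.num then x / 2 else (3 * x + 1) / 2

def rhoL : List ℕ → ℕ
  | [] => 0
  | a :: t => a * 3 ^ t.sum + 2 * rhoL t

noncomputable def xL (l : List ℕ) : ℚ :=
  (rhoL l : ℚ) / ((2 : ℚ) ^ l.length - (3 : ℚ) ^ l.sum)

open Function

lemma intCast_ne_zero_of_odd {D : ℤ} (hD : Odd D) : (D : ℚ) ≠ 0 :=
  Int.cast_ne_zero.mpr (by rintro rfl; simp at hD)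

lemma even_num_intCast_div_iff {r D : ℤ} (hD : Odd D) : Even ((r / D : ℚ)).num ↔ Even r := by
  set q : ℚ := r / D
  have hcross : q.num * D = r * q.den := by
    have : (q.num : ℚ) * D = r * q.den := by
      rw [← Rat.mul_den_eq_num, mul_right_comm, div_mul_cancel₀ _ (intCast_ne_zero_of_odd hD)]
    exact_mod_cast this
  have hDeven : ¬ Even D := Int.not_even_iff_odd.mpr hD
  have hden_dvd : (q.den : ℤ) ∣ D := by simpa [Rat.divInt_eq_div] using Rat.den_dvd r D
  have hden : ¬ Even (q.den : ℤ) := fun h =>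
    hDeven (even_iff_two_dvd.mpr ((even_iff_two_dvd.mp h).trans hden_dvd))
  rw [← or_iff_left hDeven (a := Even q.num), ← Int.even_mul, hcross, Int.even_mul,
    or_iff_left hden]

lemma odd_two_pow_sub_three_pow {n : ℕ} (hn : n ≠ 0) (s : ℕ) : Odd ((2 : ℤ) ^ n - 3 ^ s) :=
  (Int.even_pow.mpr ⟨even_two, hn⟩).sub_odd (Odd.pow (by decide))

lemma two_pow_sub_three_pow_ne_zero {n : ℕ} (hn : n ≠ 0) (s : ℕ) :
    (2 : ℚ) ^ n - 3 ^ s ≠ 0 := by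
  exact_mod_cast intCast_ne_zero_of_odd (odd_two_pow_sub_three_pow hn s)

def parityBit (x : ℚ) : ℕ := if Even x.num then 0 else 1

lemma T_eq (x : ℚ) : T x = (3 ^ parityBit x * x + parityBit x) / 2 := by
  unfold T parityBit
  split <;> simp

noncomputable def parityVector : ℕ → ℚ → List ℕ
  | 0, _ => []
  | n + 1, x => parityBit x :: parityVector n (T x)

lemma length_parityVector (n : ℕ) (x : ℚ) : (parityVector n x).length = n := by
  induction n generalizing x with
  | zero => rfl
  | succ n ih => simp [parityVector, ih]

lemma mem_parityVector {n : ℕ} {x : ℚ} {a : ℕ} (ha : a ∈ parityVector n x) :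
    a = 0 ∨ a = 1 := by
  induction n generalizing x with
  | zero => simp [parityVector] at ha
  | succ n ih =>
    rcases List.mem_cons.mp ha with rfl | ha
    · unfold parityBit; split <;> simp
    · exact ih ha

lemma iterate_T_eq (n : ℕ) (x : ℚ) :
    T^[n] x = (3 ^ (parityVector n x).sum * x + rhoL (parityVector n x)) / 2 ^ n := by
  induction n generalizing x with
  | zero => simp [parityVector, rhoL]
  | succ n ih =>
    rw [iterate_succ_apply, ih]
    simp only [parityVector, List.sum_cons, rhoL]
    generalize hy : T x = y
    rw [T_eq] at hy
    subst hy
    push_cast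
    field_simp
    ring

lemma eq_xL_parityVector_of_iterate_eq {n : ℕ} (hn : n ≠ 0) {x : ℚ} (hx : T^[n] x = x) :
    x = xL (parityVector n x) := by
  have hD := two_pow_sub_three_pow_ne_zero hn (parityVector n x).sum
  rw [iterate_T_eq, div_eq_iff (by positivity)] at hx
  rw [xL, length_parityVector, eq_div_iff hD]
  linear_combination -hx

lemma rhoL_append_singleton (t : List ℕ) (a : ℕ) :
    rhoL (t ++ [a]) = 3 ^ a * rhoL t + a * 2 ^ t.length := by
  induction t with
  | nil => simp [rhoL]
  | cons b t ih =>
    simp only [List.cons_append, rhoL, ih, List.sum_append, List.sum_singleton, List.length_cons,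
      pow_add, pow_succ]
    ring

lemma parityBit_xL_cons {a : ℕ} (ha : a = 0 ∨ a = 1) (t : List ℕ) :
    parityBit (xL (a :: t)) = a := by
  have hx : xL (a :: t) =
      ((rhoL (a :: t) : ℤ) : ℚ) / ((2 ^ (t.length + 1) - 3 ^ (a :: t).sum : ℤ) : ℚ) := by
    push_cast; rfl
  have hpar : Even (xL (a :: t)).num ↔ Even a := by
    rw [hx, even_num_intCast_div_iff (odd_two_pow_sub_three_pow t.length.succ_ne_zero _),
      Int.even_coe_nat, rhoL]
    simp [Nat.even_add, Nat.even_mul, Nat.even_pow, show ¬Even 3 by decide]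
  rcases ha with rfl | rfl <;> simp [parityBit, hpar]

lemma T_xL_cons {a : ℕ} (ha : a = 0 ∨ a = 1) (t : List ℕ) :
    T (xL (a :: t)) = xL (t ++ [a]) := by
  have hD := two_pow_sub_three_pow_ne_zero t.length.succ_ne_zero (a + t.sum)
  rw [T_eq, parityBit_xL_cons ha]
  simp only [xL, rhoL, rhoL_append_singleton, List.sum_cons, List.sum_append, List.length_cons,
    List.length_append, List.length_nil, List.sum_nil, zero_add, add_zero]
  rw [add_comm t.sum a]
  push_cast
  field_simp
  ring

lemma iterate_T_xL {l : List ℕ} (hl : l ≠ []) (hbin : ∀ a ∈ l, a = 0 ∨ a = 1) (m : ℕ) :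
    T^[m] (xL l) = xL (l.rotate m) := by
  induction m with
  | zero => simp
  | succ m ih =>
    obtain ⟨a, t, hat⟩ := List.exists_cons_of_ne_nil (l := l.rotate m)
      (List.rotate_eq_nil_iff.not.mpr hl)
    have ha : a = 0 ∨ a = 1 := hbin a (List.mem_rotate.mp (hat ▸ List.mem_cons_self))
    rw [iterate_succ_apply', ih, hat, T_xL_cons ha, ← List.rotate_rotate, hat,
      List.rotate_cons_succ, List.rotate_zero]

theorem stmt_9_general (k : ℕ) :
    (∃ x : ℚ, x.den = k ∧ ∃ n : ℕ, 1 ≤ n ∧ T^[n] x = x) ↔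
    (∃ l : List ℕ, 1 ≤ l.length ∧ (∀ a ∈ l, a = 0 ∨ a = 1) ∧ (xL l).den = k) := by
  constructor
  · rintro ⟨x, rfl, n, hn, hx⟩
    refine ⟨parityVector n x, by rwa [length_parityVector], fun a => mem_parityVector, ?_⟩
    rw [← eq_xL_parityVector_of_iterate_eq (by omega) hx]
  · rintro ⟨l, hl, hbin, rfl⟩
    refine ⟨xL l, rfl, l.length, hl, ?_⟩
    rw [iterate_T_xL (List.ne_nil_of_length_pos hl) hbin, List.rotate_length]

/-- Proposition 3.1, claim 2: there is a `T`-periodic point in `D_k` iff some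
`0-1` vector `v` has `x(v)` of denominator `k` in lowest terms. -/
theorem stmt_9 (k : ℕ) (hk : 0 < k) (h6 : Nat.gcd k 6 = 1) :
    (∃ x : ℚ, x.den = k ∧ ∃ n : ℕ, 1 ≤ n ∧ T^[n] x = x) ↔
    (∃ l : List ℕ, 1 ≤ l.length ∧ (∀ a ∈ l, a = 0 ∨ a = 1) ∧ (xL l).den = k) :=
  stmt_9_general k
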